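/- Let A be a nonempty factorial design with n runs in the design space D that has no replicates (every point of D has multiplicity at most 1 in A), and let {C_t : t ∈ T} be an SOCB on D with coefficients b_t of A. Then Σ_{t ∈ T} (b_t / b_0)² = N / n. -/

import Mathlib

/-! Each factor's contrast matrix is `√(s i)` times an orthogonal matrix, so its columns are
orthogonal too, and the product contrasts satisfy `Σ_t C_t(x) C_t(y) = N·[x = y]`. Expanding the
squares and summing over `t` first gives `Σ_t b_t² = N⁻¹ Σ_x (count x)²`. Without replicates
`(count x)² = count x`, whence `Σ_t b_t² = n / N = b_0`, and dividing by `b_0²` gives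
`N / n`. -/

open Finset

lemma Matrix.transpose_mul_self_eq_smul_one {K n : Type*} [Field K] [Fintype n] [DecidableEq n]
    {M : Matrix n n K} {c : K} (hc : c ≠ 0) (h : M * M.transpose = c • 1) :
    M.transpose * M = c • 1 := by
  have hinv : (c⁻¹ • M.transpose) * M = 1 :=
    mul_eq_one_comm.mp (by rw [Matrix.mul_smul, h, smul_smul, inv_mul_cancel₀ hc, one_smul])
  calc M.transpose * M = c • ((c⁻¹ • M.transpose) * M) := by
        rw [Matrix.smul_mul, smul_smul, mul_inv_cancel₀ hc, one_smul]
    _ = c • 1 := by rw [hinv]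

lemma sum_mul_eq_ite_of_orthogonal_rows {K ι : Type*} [Field K] [Fintype ι] [DecidableEq ι]
    {C : ι → ι → K} {c : K} (hc : c ≠ 0)
    (h : ∀ u v, ∑ x, C u x * C v x = if u = v then c else 0) (x y : ι) :
    ∑ j, C j x * C j y = if x = y then c else 0 := by
  have hrows : Matrix.of C * (Matrix.of C).transpose = c • 1 := by
    ext u v
    simp [Matrix.mul_apply, Matrix.one_apply, h]
  simpa [Matrix.mul_apply, Matrix.one_apply] using
    congr_fun₂ (Matrix.transpose_mul_self_eq_smul_one hc hrows) x y

lemma sum_prod_mul_prod_eq_ite {κ R : Type*} [Fintype κ] [DecidableEq κ] {ι : κ → Type*}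
    [∀ i, Fintype (ι i)] [∀ i, DecidableEq (ι i)] [CommRing R]
    (C : ∀ i, ι i → ι i → R) (c : κ → R)
    (h : ∀ i x y, ∑ j, C i j x * C i j y = if x = y then c i else 0) (x y : ∀ i, ι i) :
    ∑ t : ∀ i, ι i, (∏ i, C i (t i) (x i)) * ∏ i, C i (t i) (y i) =
      if x = y then ∏ i, c i else 0 := by
  simp_rw [← prod_mul_distrib]
  rw [← Fintype.prod_sum fun i j => C i j (x i) * C i j (y i)]
  simp_rw [h]
  split_ifs with hxy
  · simp [hxy]
  · obtain ⟨i, hi⟩ := Function.ne_iff.mp hxy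
    exact prod_eq_zero (mem_univ i) (if_neg hi)

lemma sum_sq_sum_mul_eq_of_orthogonal {T D R : Type*} [Fintype T] [Fintype D] [DecidableEq D]
    [CommRing R]
    (φ : T → D → R) (N : R) (hφ : ∀ x y, ∑ t, φ t x * φ t y = if x = y then N else 0)
    (a : D → R) :
    ∑ t, (∑ x, a x * φ t x) ^ 2 = N * ∑ x, a x ^ 2 := by
  calc ∑ t, (∑ x, a x * φ t x) ^ 2 = ∑ x, ∑ y, a x * a y * ∑ t, φ t x * φ t y := by
        simp_rw [sq, sum_mul_sum, mul_sum]
        rw [sum_comm]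
        refine sum_congr rfl fun x _ => ?_
        rw [sum_comm]
        exact sum_congr rfl fun y _ => sum_congr rfl fun t _ => by ring
    _ = N * ∑ x, a x ^ 2 := by
        simp [hφ, mul_sum, sq, mul_comm]

lemma Multiset.sum_map_eq_sum_count {α M : Type*} [Fintype α] [DecidableEq α] [AddCommMonoid M]
    (A : Multiset α) (f : α → M) : (A.map f).sum = ∑ x, A.count x • f x := by
  rw [sum_multiset_map_count]
  exact sum_subset (subset_univ _) fun x _ hx => by
    rw [Multiset.count_eq_zero.mpr (by simpa using hx), zero_smul]

lemma Multiset.Nodup.sum_count_sq_eq_card {α R : Type*} [Fintype α] [DecidableEq α] [Semiring R]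
    {A : Multiset α} (hA : A.Nodup) : ∑ x, (A.count x : R) ^ 2 = Multiset.card A := by
  have hidem : ∀ x, (A.count x : R) ^ 2 = A.count x := fun x => by
    rw [Multiset.count_eq_of_nodup hA]
    split_ifs <;> simp
  simp_rw [hidem]
  rw [← Nat.cast_sum, Multiset.sum_count_eq_card fun x _ => mem_univ x]

theorem sum_normalized_coefficients_sq_no_replicates_general
    (k : ℕ) (s : Fin k → ℕ) (hs : ∀ i, 1 ≤ s i)
    (C : ∀ i : Fin k, Fin (s i) → Fin (s i) → ℝ)
    (horth : ∀ (i : Fin k) (u v : Fin (s i)),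
      ∑ x : Fin (s i), C i u x * C i v x = if u = v then (s i : ℝ) else 0)
    (hC0 : ∀ (i : Fin k) (x : Fin (s i)), C i ⟨0, hs i⟩ x = 1)
    (A : Multiset (∀ i, Fin (s i))) (hA : A ≠ 0)
    (hnorep : ∀ x : (∀ i, Fin (s i)), A.count x ≤ 1)
    (b : (∀ i, Fin (s i)) → ℝ)
    (hb : ∀ t : (∀ i, Fin (s i)),
      b t = (1 / ((∏ i, s i : ℕ) : ℝ)) * (A.map (fun x => ∏ i, C i (t i) (x i))).sum) :
    ∑ t : (∀ i, Fin (s i)), (b t / b (fun i => ⟨0, hs i⟩)) ^ 2 =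
      ((∏ i, s i : ℕ) : ℝ) / (Multiset.card A : ℝ) := by
  set N : ℝ := ((∏ i, s i : ℕ) : ℝ)
  have hN : 0 < N := Nat.cast_pos.mpr (prod_pos fun i _ => hs i)
  have hn : 0 < (Multiset.card A : ℝ) := Nat.cast_pos.mpr (Multiset.card_pos.mpr hA)
  have hcard : ∑ x, (A.count x : ℝ) = Multiset.card A := by
    rw [← Nat.cast_sum, Multiset.sum_count_eq_card fun x _ => mem_univ x]
  have hb' : ∀ t, b t = N⁻¹ * ∑ x, (A.count x : ℝ) * ∏ i, C i (t i) (x i) := fun t => by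
    simp [hb t, Multiset.sum_map_eq_sum_count, N]
  have hcols : ∀ x y : ∀ i, Fin (s i), ∑ t : ∀ i, Fin (s i),
      (∏ i, C i (t i) (x i)) * (∏ i, C i (t i) (y i)) = if x = y then N else 0 := by
    simpa [N] using sum_prod_mul_prod_eq_ite C (fun i => (s i : ℝ)) fun i =>
      sum_mul_eq_ite_of_orthogonal_rows (Nat.cast_pos.mpr (hs i)).ne' (horth i)
  have hb0 : b (fun i => ⟨0, hs i⟩) = Multiset.card A / N := by
    simp only [hb', hC0, prod_const_one, mul_one, hcard]
    ring
  have hsq : ∑ t, b t ^ 2 = Multiset.card A / N := by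
    simp_rw [hb', mul_pow, ← mul_sum]
    rw [sum_sq_sum_mul_eq_of_orthogonal _ N hcols,
      (Multiset.nodup_iff_count_le_one.mpr hnorep).sum_count_sq_eq_card]
    field_simp
  simp_rw [div_pow]
  rw [← sum_div, hsq, hb0]
  field_simp

/-- For a nonempty design `A` with `n` runs and no replicates
(every point has multiplicity at most one), the SOCB coefficients satisfy
`Σ_{t ∈ T} (b_t / b_0)² = N / n`. -/
theorem sum_normalized_coefficients_sq_no_replicates
    (k : ℕ) (hk : 1 ≤ k) (s : Fin k → ℕ) (hs : ∀ i, 1 ≤ s i)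
    (C : ∀ i : Fin k, Fin (s i) → Fin (s i) → ℝ)
    (horth : ∀ (i : Fin k) (u v : Fin (s i)),
      ∑ x : Fin (s i), C i u x * C i v x = if u = v then (s i : ℝ) else 0)
    (hC0 : ∀ (i : Fin k) (x : Fin (s i)), C i ⟨0, hs i⟩ x = 1)
    (A : Multiset (∀ i, Fin (s i))) (hA : A ≠ 0)
    (hnorep : ∀ x : (∀ i, Fin (s i)), A.count x ≤ 1)
    (b : (∀ i, Fin (s i)) → ℝ)
    (hb : ∀ t : (∀ i, Fin (s i)),
      b t = (1 / ((∏ i, s i : ℕ) : ℝ)) * (A.map (fun x => ∏ i, C i (t i) (x i))).sum) :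
    ∑ t : (∀ i, Fin (s i)), (b t / b (fun i => ⟨0, hs i⟩)) ^ 2 =
      ((∏ i, s i : ℕ) : ℝ) / (Multiset.card A : ℝ) :=
  sum_normalized_coefficients_sq_no_replicates_general k s hs C horth hC0 A hA hnorep b hb
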